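/- For the Morrison–Pinkham matrix factorization, with c = (x, −y, −z, w) the first row of Φ, d = (0,0,0,1)ᵀ, and a, b the 4×4 matrices a = [[0,1,0,0],[−(y−λw),0,0,0],[0,0,0,1],[0,0,−(y−λw),0]] (specializing the universal a with u = y−λw, v = 0) and b = [[0,0,1,0],[0,0,0,−1],[−w,0,0,0],[0,w,0,0]], the relation a² + b·d·c + d·c·b + λb² + b³ ≡ 0 holds modulo the column space of Ψ (i.e., (a² + bdc + dcb + λb² + b³)·v lies in the image of Ψ for every v, as maps on the cokernel M = coker Ψ). -/

import Mathlib

open MvPolynomial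

noncomputable section

abbrev S13 : Type := MvPolynomial (Fin 4) ℂ

def w13 : S13 := X 0
def x13 : S13 := X 1
def y13 : S13 := X 2
def z13 : S13 := X 3

def f13 (l : ℂ) : S13 :=
  x13^2 + y13^3 + w13*z13^2 + w13^3*y13 - C l * w13 * y13^2 - C l * w13^4

abbrev R13 (l : ℂ) : Type := S13 ⧸ Ideal.span {f13 l}

def pi13 (l : ℂ) : S13 →+* R13 l := Ideal.Quotient.mk (Ideal.span {f13 l})

def PsiMP13 (l : ℂ) : Matrix (Fin 4) (Fin 4) S13 :=
  !![x13, y13, z13, -w13;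
     -(y13 - C l * w13)*y13, x13, (y13 - C l * w13)*w13, z13;
     -w13*z13, -w13^2, x13, -y13;
     (y13 - C l * w13)*w13^2, -w13*z13, (y13 - C l * w13)*y13, x13]

def aMP (l : ℂ) : Matrix (Fin 4) (Fin 4) S13 :=
  !![0, 1, 0, 0; -(y13 - C l * w13), 0, 0, 0; 0, 0, 0, 1; 0, 0, -(y13 - C l * w13), 0]

def bMP : Matrix (Fin 4) (Fin 4) S13 :=
  !![0, 0, 1, 0; 0, 0, 0, -1; -w13, 0, 0, 0; 0, w13, 0, 0]

/-- the column vector d -/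
def dMP : Fin 4 → S13 := ![0, 0, 0, 1]

/-- the row vector c (the first row of Φ) -/
def cMP : Fin 4 → S13 := ![x13, -y13, -z13, w13]

/-- the rank-one matrix d·c -/
def dcMP : Matrix (Fin 4) (Fin 4) S13 := Matrix.of fun i j => dMP i * cMP j

/-- the master relation matrix a² + b·d·c + d·c·b + λ b² + b³ -/
def EMP (l : ℂ) : Matrix (Fin 4) (Fin 4) S13 :=
  aMP l * aMP l + bMP * dcMP + dcMP * bMP + (C l : S13) • (bMP * bMP) + bMP * bMP * bMP

/-
Both `a` and `b` square to scalars, `a² = -(y - λw)` and `b² = -w`, so the relation collapses to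
`b·d·c + d·c·b - w·b - y`. The only nonzero columns of this matrix are its first and third, and they
are `-Ψ₂` and `Ψ₄`, the negated second and the fourth column of `Ψ`. So it factors as `Ψ·K` already
over the polynomial ring, with `K` a constant matrix, and this factorization survives reduction mod `f`.
-/

theorem Matrix.mulVec_mem_range_mulVecLin_mul {R : Type*} [CommSemiring R] {m n p : Type*}
    [Fintype n] [Fintype p] (A : Matrix m n R) (B : Matrix n p R) (v : p → R) :
    (A * B).mulVec v ∈ LinearMap.range A.mulVecLin :=
  ⟨B.mulVec v, by rw [Matrix.mulVecLin_apply, Matrix.mulVec_mulVec]⟩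

theorem aMP_mul_self (l : ℂ) : aMP l * aMP l = -(y13 - C l * w13) • 1 := by
  ext i j : 2
  fin_cases i <;> fin_cases j <;> simp [aMP, Matrix.mul_apply, Fin.sum_univ_four]

theorem bMP_mul_self : bMP * bMP = -w13 • 1 := by
  ext i j : 2
  fin_cases i <;> fin_cases j <;> simp [bMP, Matrix.mul_apply, Fin.sum_univ_four]

theorem dcMP_eq : dcMP = !![0, 0, 0, 0; 0, 0, 0, 0; 0, 0, 0, 0; x13, -y13, -z13, w13] := by
  ext i j : 2
  fin_cases i <;> fin_cases j <;> simp [dcMP, dMP, cMP]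

theorem EMP_eq (l : ℂ) : EMP l = bMP * dcMP + dcMP * bMP - w13 • bMP - y13 • 1 := by
  rw [EMP, aMP_mul_self, bMP_mul_self, Matrix.smul_mul, Matrix.one_mul, smul_smul]
  module

def kMP : Matrix (Fin 4) (Fin 4) S13 := !![0, 0, 0, 0; -1, 0, 0, 0; 0, 0, 0, 0; 0, 0, 1, 0]

theorem EMP_eq_PsiMP13_mul (l : ℂ) : EMP l = PsiMP13 l * kMP := by
  rw [EMP_eq, dcMP_eq]
  ext i j : 2
  fin_cases i <;> fin_cases j <;>
    simp [PsiMP13, bMP, kMP, Matrix.mul_apply, Fin.sum_univ_four, sq, mul_comm]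

theorem master_relation_mod_Psi (l : ℂ) :
    ∀ v : Fin 4 → R13 l,
      (((EMP l).map (pi13 l)).mulVec v) ∈
        LinearMap.range ((PsiMP13 l).map (pi13 l)).mulVecLin := by
  intro v
  rw [EMP_eq_PsiMP13_mul, Matrix.map_mul]
  exact Matrix.mulVec_mem_range_mulVecLin_mul _ _ v

end
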